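/- Let a ∈ B(H) be positive and injective, and let B : H × H → ℂ be a sesquilinear form (conjugate-linear in the first argument, linear in the second) which is hermitian, i.e. B(f,g) = conj(B(g,f)) for all f,g ∈ H, and satisfies |B(f,f)| ≤ ‖√a f‖² for all f ∈ H. Then there exists a selfadjoint operator y ∈ B(H) with ‖y‖ ≤ 1 such that B(f,g) = ⟪√a f, y(√a g)⟫ for all f, g ∈ H. -/

import Mathlib

/-!
Polarization and the parallelogram law for `‖√a ·‖` give
`2 Re B(f, g) ≤ ‖√a f‖² + ‖√a g‖²`; scaling `f` by reals (a discriminant argument) and then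
rotating it by a phase turn this into the Cauchy–Schwarz bound `|B(f, g)| ≤ ‖√a f‖ ‖√a g‖`.
As `√a` is selfadjoint and injective, its range is dense, so `B`, read as a form on the range of
`√a`, extends to a bounded sesquilinear form of norm `≤ 1` on `H`. Its Riesz representative `y`
is selfadjoint because `B` is hermitian.
-/

open scoped InnerProductSpace ComplexConjugate

section CauchySchwarz

open RCLike

variable {𝕜 E F : Type*} [RCLike 𝕜] [AddCommGroup E] [Module 𝕜 E]
  [NormedAddCommGroup F] [InnerProductSpace 𝕜 F]
  {B : E →ₗ⋆[𝕜] E →ₗ[𝕜] 𝕜} {T : E →ₗ[𝕜] F}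

theorem two_mul_re_le_of_norm_apply_self_le (hB : ∀ f g, B f g = conj (B g f))
    (hT : ∀ f, ‖B f f‖ ≤ ‖T f‖ ^ 2) (f g : E) :
    2 * re (B f g) ≤ ‖T f‖ ^ 2 + ‖T g‖ ^ 2 := by
  have hpolar : re (B (f + g) (f + g)) - re (B (f - g) (f - g)) = 4 * re (B f g) := by
    simp only [map_add, map_sub, LinearMap.add_apply, LinearMap.sub_apply, hB g f, conj_re]
    ring
  have hplus := (abs_le.mp ((abs_re_le_norm (B (f + g) (f + g))).trans (hT (f + g)))).2
  have hminus := (abs_le.mp ((abs_re_le_norm (B (f - g) (f - g))).trans (hT (f - g)))).1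
  have hpar := parallelogram_law_with_norm 𝕜 (T f) (T g)
  rw [← map_add, ← map_sub] at hpar
  nlinarith

theorem re_le_of_norm_apply_self_le (hB : ∀ f g, B f g = conj (B g f))
    (hT : ∀ f, ‖B f f‖ ≤ ‖T f‖ ^ 2) (f g : E) :
    re (B f g) ≤ ‖T f‖ * ‖T g‖ := by
  have hquad : ∀ t : ℝ, 0 ≤ ‖T f‖ ^ 2 * (t * t) + (-2 * re (B f g)) * t + ‖T g‖ ^ 2 := by
    intro t
    have h := two_mul_re_le_of_norm_apply_self_le hB hT ((t : 𝕜) • f) g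
    simp only [LinearMap.map_smulₛₗ, conj_ofReal, LinearMap.smul_apply, smul_eq_mul, re_ofReal_mul,
      map_smul, norm_smul, norm_ofReal, mul_pow, sq_abs] at h
    nlinarith
  have hdiscrim := discrim_le_zero hquad
  rw [discrim] at hdiscrim
  refine (le_abs_self _).trans (abs_le_of_sq_le_sq ?_ (by positivity))
  nlinarith

theorem norm_apply_le_of_norm_apply_self_le (hB : ∀ f g, B f g = conj (B g f))
    (hT : ∀ f, ‖B f f‖ ≤ ‖T f‖ ^ 2) (f g : E) :
    ‖B f g‖ ≤ ‖T f‖ * ‖T g‖ := by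
  -- rotating `f` by `B f g` makes the form real and equal to `‖B f g‖ ^ 2`
  have h := re_le_of_norm_apply_self_le hB hT (B f g • f) g
  rw [LinearMap.map_smulₛₗ, LinearMap.smul_apply, smul_eq_mul, RCLike.conj_mul, map_smul,
    norm_smul] at h
  norm_cast at h
  nlinarith [norm_nonneg (B f g), mul_nonneg (norm_nonneg (T f)) (norm_nonneg (T g))]

end CauchySchwarz

theorem LinearMap.IsSymmetric.denseRange_of_injective {𝕜 E : Type*} [RCLike 𝕜]
    [NormedAddCommGroup E] [InnerProductSpace 𝕜 E] [CompleteSpace E] {T : E →ₗ[𝕜] E}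
    (hT : T.IsSymmetric) (hinj : Function.Injective T) : DenseRange T := by
  change Dense (LinearMap.range T : Set E)
  rw [Submodule.dense_iff_topologicalClosure_eq_top, Submodule.topologicalClosure_eq_top_iff,
    hT.orthogonal_range, LinearMap.ker_eq_bot.mpr hinj]

section Representation

variable {𝕜 E H : Type*} [RCLike 𝕜] [AddCommGroup E] [Module 𝕜 E]
  [NormedAddCommGroup H] [InnerProductSpace 𝕜 H] [CompleteSpace H]
  {s : E →ₗ[𝕜] H}

theorem exists_inner_apply_eq_of_norm_apply_le (hs : DenseRange s) (B : E →ₗ⋆[𝕜] E →ₗ[𝕜] 𝕜)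
    {C : ℝ} (hC : 0 ≤ C) (hB : ∀ f g, ‖B f g‖ ≤ C * ‖s f‖ * ‖s g‖) :
    ∃ y : H →L[𝕜] H, ‖y‖ ≤ C ∧ ∀ f g, B f g = ⟪y (s f), s g⟫_𝕜 := by
  have hext : ∀ f g, (B f).extendOfNorm s (s g) = B f g := fun f g =>
    LinearMap.extendOfNorm_eq hs ⟨_, hB f⟩ g
  -- Extend `B` along `s` in the second variable, then in the first; the first extension is
  -- unique, hence semilinear in `f`.
  let Ψ : E →ₗ⋆[𝕜] H →L[𝕜] 𝕜 :=
    { toFun f := (B f).extendOfNorm s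
      map_add' f f' := LinearMap.extendOfNorm_unique hs _ (hB (f + f')) _ <| by
        ext g; simp [hext]
      map_smul' c f := LinearMap.extendOfNorm_unique hs _ (hB (c • f)) _ <| by
        ext g; simp [hext] }
  have hΨ : ∀ f, ‖Ψ f‖ ≤ C * ‖s f‖ := fun f =>
    LinearMap.opNorm_extendOfNorm_le hs (by positivity) (hB f)
  set B' : H →L⋆[𝕜] H →L[𝕜] 𝕜 := Ψ.extendOfNorm s
  have hB' : ∀ f, B' (s f) = Ψ f := LinearMap.extendOfNorm_eq hs ⟨C, hΨ⟩
  refine ⟨InnerProductSpace.continuousLinearMapOfBilin B', ?_, fun f g => ?_⟩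
  · exact ContinuousLinearMap.opNorm_le_bound _ hC fun v =>
      ((InnerProductSpace.toDual 𝕜 H).symm.norm_map (B' v)).trans_le
        (LinearMap.norm_extendOfNorm_apply_le hs C hΨ v)
  · rw [InnerProductSpace.continuousLinearMapOfBilin_apply, hB']
    exact (hext f g).symm

theorem isSelfAdjoint_of_inner_apply_eq_conj (hs : DenseRange s) {y : H →L[𝕜] H}
    (hy : ∀ f g, ⟪y (s f), s g⟫_𝕜 = conj ⟪y (s g), s f⟫_𝕜) : IsSelfAdjoint y := by
  rw [ContinuousLinearMap.isSelfAdjoint_iff_isSymmetric]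
  refine hs.induction_on₂ (isClosed_eq (by fun_prop) (by fun_prop)) fun f g => ?_
  rw [ContinuousLinearMap.coe_coe, hy, inner_conj_symm]

end Representation

/-- Let `a ∈ B(H)` be positive injective and `B` a hermitian sesquilinear
form (conjugate-linear in the first variable) with `|B(f,f)| ≤ ‖√a f‖²` for all `f`.
Then there is a selfadjoint `y ∈ B(H)` with `‖y‖ ≤ 1` and
`B(f,g) = ⟪√a f, y (√a g)⟫` for all `f, g`. -/
theorem stmt5 (H : Type*) [NormedAddCommGroup H] [InnerProductSpace ℂ H] [CompleteSpace H]
    (a : H →L[ℂ] H) (ha_pos : 0 ≤ a) (ha_inj : Function.Injective a)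
    (B : H →ₗ⋆[ℂ] H →ₗ[ℂ] ℂ)
    (hB_herm : ∀ f g : H, B f g = starRingEnd ℂ (B g f))
    (hB_bdd : ∀ f : H, ‖B f f‖ ≤ ‖CFC.sqrt a f‖ ^ 2) :
    ∃ y : H →L[ℂ] H, IsSelfAdjoint y ∧ ‖y‖ ≤ 1 ∧
      ∀ f g : H, B f g = ⟪CFC.sqrt a f, y (CFC.sqrt a g)⟫_ℂ := by
  set s := CFC.sqrt a
  have hs_sa : IsSelfAdjoint s := (CFC.sqrt_nonneg a).isSelfAdjoint
  have hs_inj : Function.Injective s := by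
    rw [← CFC.sqrt_mul_sqrt_self a ha_pos] at ha_inj
    exact Function.Injective.of_comp (f := s) ha_inj
  have hs_dense : DenseRange (s : H →ₗ[ℂ] H) := hs_sa.isSymmetric.denseRange_of_injective hs_inj
  obtain ⟨y, hy_norm, hy⟩ := exists_inner_apply_eq_of_norm_apply_le hs_dense B zero_le_one
    fun f g => by
      rw [one_mul]
      exact norm_apply_le_of_norm_apply_self_le (T := (s : H →ₗ[ℂ] H)) hB_herm hB_bdd f g
  have hy_sa : IsSelfAdjoint y := isSelfAdjoint_of_inner_apply_eq_conj hs_dense fun f g => by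
    rw [← hy, ← hy, hB_herm]
  refine ⟨y, hy_sa, hy_norm, fun f g => ?_⟩
  rw [hy]
  exact hy_sa.isSymmetric _ _
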